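/- arXiv:2203.03533 — 4 statements merged into one kernel-verified Lean document; each statement's English description precedes it below -/
import Mathlib

section
/- For each d ∈ {3, 5, 6, 7}, the group X₀(17)(Q(√d)) of Q(√d)-rational points of the modular curve X₀(17) contains a point of infinite order. -/
open Polynomial IntermediateField NumberField

/-- The modular curve `X₀(11)`: the elliptic curve `y² + y = x³ - x² - 10x - 20`
(Cremona label 11a1), with coefficients in the field `K`. -/
noncomputable def X0_11 (K : Type*) [Field K] : WeierstrassCurve.Affine K :=
  { a₁ := 0, a₂ := -1, a₃ := 1, a₄ := -10, a₆ := -20 }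

/-- The modular curve `X₀(17)`: the elliptic curve `y² + xy + y = x³ - x² - x - 14`
(Cremona label 17a1), with coefficients in the field `K`. -/
noncomputable def X0_17 (K : Type*) [Field K] : WeierstrassCurve.Affine K :=
  { a₁ := 1, a₂ := -1, a₃ := 1, a₄ := -1, a₆ := -14 }

/-- The modular curve `X₀(19)`: the elliptic curve `y² + y = x³ + x² - 9x - 15`
(Cremona label 19a3), with coefficients in the field `K`. -/
noncomputable def X0_19 (K : Type*) [Field K] : WeierstrassCurve.Affine K :=
  { a₁ := 0, a₂ := 1, a₃ := 1, a₄ := -9, a₆ := -15 }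

/-- Every `K`-point of the Weierstrass curve `W` has both coordinates in the image of `ℚ`,
i.e. `W(K)` coincides with the group of rational points `W(ℚ)`. -/
def PointsRational {K : Type*} [Field K] [CharZero K] (W : WeierstrassCurve.Affine K) : Prop :=
  ∀ x y : K, W.Nonsingular x y → (∃ a : ℚ, (a : K) = x) ∧ ∃ b : ℚ, (b : K) = y

/-!
Write `D(x) = 4x³ - 3x² - 2x - 55`, so that a point of `X₀(17)` satisfies `(2y + x + 1)² = D(x)`,
and the duplication formula reads `x(2P) = (x⁴ + x² + 110x - 41) / D(x)`. For each `d`, a rational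
point of the twist `d s² = D(x)` gives the point `(x, (s√d - x - 1)/2)` over `ℚ(√d)`. If
`|x|₂ > 4`, the leading terms dominate 2-adically and `|x(2P)|₂ = 4 |x(P)|₂`; so the multiples
`2ᵏP` have rational `x`-coordinates of strictly increasing 2-adic absolute value, hence are
pairwise distinct, and `P` has infinite order.
-/

namespace padicNorm

variable {p : ℕ} [Fact p.Prime]

theorem add_eq_left_of_lt {q r : ℚ} (h : padicNorm p r < padicNorm p q) :
    padicNorm p (q + r) = padicNorm p q := by
  rw [add_eq_max_of_ne h.ne', max_eq_left h.le]

theorem pow (q : ℚ) (n : ℕ) : padicNorm p (q ^ n) = padicNorm p q ^ n :=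
  IsAbsoluteValue.abv_pow (padicNorm p) q n

theorem int_mul_le (z : ℤ) (q : ℚ) : padicNorm p (z * q) ≤ padicNorm p q := by
  rw [padicNorm.mul]
  exact mul_le_of_le_one_left (padicNorm.nonneg q) (padicNorm.of_int z)

theorem int_quadratic_le {q : ℚ} (hq : 1 ≤ padicNorm p q) (a b c : ℤ) :
    padicNorm p (a * q ^ 2 + b * q + c) ≤ padicNorm p q ^ 2 := by
  have h2 : padicNorm p (a * q ^ 2) ≤ padicNorm p q ^ 2 := (int_mul_le a _).trans (pow q 2).le
  have h1 : padicNorm p (b * q) ≤ padicNorm p q ^ 2 := (int_mul_le b q).trans (by nlinarith)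
  have h0 : padicNorm p c ≤ padicNorm p q ^ 2 := (padicNorm.of_int c).trans (by nlinarith)
  exact padicNorm.nonarchimedean.trans
    (max_le (padicNorm.nonarchimedean.trans (max_le h2 h1)) h0)

theorem int_div_pow_mul_int {a b : ℤ} (ha : ¬(p : ℤ) ∣ a) (hb : ¬(p : ℤ) ∣ b) (e : ℕ) :
    padicNorm p (a / (p ^ e * b)) = (p : ℚ) ^ e := by
  rw [padicNorm.div, padicNorm.mul, pow, padicNorm_p_of_prime, (int_eq_one_iff a).2 ha,
    (int_eq_one_iff b).2 hb]
  simp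

end padicNorm

theorem four_lt_padicNorm_two_div {a b : ℤ} (ha : ¬2 ∣ a) (hb : ¬2 ∣ b) {e : ℕ} (he : 3 ≤ e) :
    4 < padicNorm 2 (a / (2 ^ e * b)) := by
  have h := padicNorm.int_div_pow_mul_int (p := 2) ha hb e
  push_cast at h
  rw [h]
  calc (4 : ℚ) < 2 ^ 3 := by norm_num
    _ ≤ 2 ^ e := pow_le_pow_right₀ (by norm_num) he

theorem not_isOfFinAddOrder_of_injective_nsmul_comp {G : Type*} [AddMonoid G] {a : G}
    {f : ℕ → ℕ} (hf : Function.Injective fun k ↦ f k • a) : ¬IsOfFinAddOrder a := fun ha ↦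
  Set.infinite_range_of_injective hf <| ha.finite_multiples.subset <| Set.range_subset_iff.2
    fun _ ↦ (AddSubmonoid.multiples a).nsmul_mem (AddSubmonoid.mem_multiples a) _

namespace WeierstrassCurve.Affine

variable {F : Type*} [Field F] {W : Affine F} {x y : F}

lemma Y_sub_negY_sq (h : W.Equation x y) :
    (y - W.negY x y) ^ 2 = 4 * x ^ 3 + W.b₂ * x ^ 2 + 2 * W.b₄ * x + W.b₆ := by
  rw [equation_iff] at h
  simp only [negY, b₂, b₄, b₆]
  linear_combination 4 * h

variable [DecidableEq F]

lemma addX_slope_self_mul (h : W.Equation x y) (hy : y ≠ W.negY x y) :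
    W.addX x x (W.slope x x y y) * (4 * x ^ 3 + W.b₂ * x ^ 2 + 2 * W.b₄ * x + W.b₆) =
      x ^ 4 - W.b₄ * x ^ 2 - 2 * W.b₆ * x - W.b₈ := by
  set ℓ := W.slope x x y y with hℓ_def
  have hℓ : ℓ * (y - W.negY x y) = 3 * x ^ 2 + 2 * W.a₂ * x + W.a₄ - W.a₁ * y := by
    rw [hℓ_def, slope_of_Y_ne rfl hy, div_mul_cancel₀ _ (sub_ne_zero.mpr hy)]
  rw [← Y_sub_negY_sq h]
  rw [equation_iff] at h
  simp only [addX, negY, b₄, b₆, b₈] at hℓ ⊢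
  -- with `u = 2y + a₁x + a₃`: `addX · u² = (ℓu)² + a₁ (ℓu) u - (a₂ + 2x) u²`, then reduce `y²`
  linear_combination ((ℓ + W.a₁) * (2 * y + W.a₁ * x + W.a₃) + 3 * x ^ 2 + 2 * W.a₂ * x + W.a₄ -
    W.a₁ * y) * hℓ - (W.a₁ ^ 2 + 4 * W.a₂ + 8 * x) * h

end WeierstrassCurve.Affine

open WeierstrassCurve WeierstrassCurve.Affine

namespace X0_17

variable {F : Type*} [Field F]

lemma b₂_eq : (X0_17 F).b₂ = -3 := by simp only [X0_17, b₂]; norm_num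
lemma b₄_eq : (X0_17 F).b₄ = -1 := by simp only [X0_17, b₄]; norm_num
lemma b₆_eq : (X0_17 F).b₆ = -55 := by simp only [X0_17, b₆]; norm_num
lemma b₈_eq : (X0_17 F).b₈ = 41 := by simp only [X0_17, b₈]; norm_num

lemma Δ_ne_zero [CharZero F] : (X0_17 F).Δ ≠ 0 := by
  simp only [X0_17, Δ, b₂, b₄, b₆, b₈]; norm_num

theorem nonsingular_of_sq_eq [CharZero F] {w : F} {c q s : ℚ} (hw : w ^ 2 = c)
    (hs : c * s ^ 2 = 4 * q ^ 3 - 3 * q ^ 2 - 2 * q - 55) :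
    (X0_17 F).Nonsingular q ((s * w - q - 1) / 2) := by
  rw [← equation_iff_nonsingular_of_Δ_ne_zero Δ_ne_zero, equation_iff]
  have hs' : (c : F) * s ^ 2 = 4 * q ^ 3 - 3 * q ^ 2 - 2 * q - 55 := by exact_mod_cast hs
  simp only [X0_17]
  linear_combination (hs' + s ^ 2 * hw) / 4

theorem padicNorm_two_duplication_num {q : ℚ} (hq : 4 < padicNorm 2 q) :
    padicNorm 2 (q ^ 4 + q ^ 2 + 110 * q - 41) = padicNorm 2 q ^ 4 := by
  have hlow := padicNorm.int_quadratic_le (p := 2) (q := q) (by linarith) 1 110 (-41)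
  push_cast at hlow
  have hlead : padicNorm 2 (q ^ 4) = padicNorm 2 q ^ 4 := padicNorm.pow q 4
  have hdom := hlow.trans_lt (pow_lt_pow_right₀ (by linarith : (1 : ℚ) < _) (by norm_num : 2 < 4))
  rw [show q ^ 4 + q ^ 2 + 110 * q - 41 = q ^ 4 + (1 * q ^ 2 + 110 * q + -41) by ring,
    padicNorm.add_eq_left_of_lt (hlead ▸ hdom), hlead]

theorem padicNorm_two_duplication_den {q : ℚ} (hq : 4 < padicNorm 2 q) :
    padicNorm 2 (4 * q ^ 3 - 3 * q ^ 2 - 2 * q - 55) = padicNorm 2 q ^ 3 / 4 := by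
  have hlow := padicNorm.int_quadratic_le (p := 2) (q := q) (by linarith) (-3) (-2) (-55)
  push_cast at hlow
  have h4 : padicNorm 2 (4 * q ^ 3) = padicNorm 2 q ^ 3 / 4 := by
    rw [padicNorm.mul, padicNorm.pow, show (4 : ℚ) = (2 : ℕ) ^ 2 by norm_num, padicNorm.pow,
      padicNorm.padicNorm_p_of_prime]
    ring
  have hdom : padicNorm 2 (-3 * q ^ 2 + -2 * q + -55) < padicNorm 2 q ^ 3 / 4 := by
    nlinarith [mul_pos (pow_pos (show (0 : ℚ) < padicNorm 2 q by linarith) 2) (sub_pos.2 hq)]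
  rw [show 4 * q ^ 3 - 3 * q ^ 2 - 2 * q - 55 = 4 * q ^ 3 + (-3 * q ^ 2 + -2 * q + -55) by ring,
    padicNorm.add_eq_left_of_lt (h4 ▸ hdom), h4]

variable [DecidableEq F]

theorem two_nsmul_some {x y : F} (h : (X0_17 F).Nonsingular x y)
    (hx : 4 * x ^ 3 - 3 * x ^ 2 - 2 * x - 55 ≠ 0) :
    ∃ (x' y' : F) (h' : (X0_17 F).Nonsingular x' y'), 2 • Point.some _ _ h = .some _ _ h' ∧
      x' = (x ^ 4 + x ^ 2 + 110 * x - 41) / (4 * x ^ 3 - 3 * x ^ 2 - 2 * x - 55) := by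
  have hsq : (y - (X0_17 F).negY x y) ^ 2 = 4 * x ^ 3 - 3 * x ^ 2 - 2 * x - 55 := by
    rw [Y_sub_negY_sq h.1, b₂_eq, b₄_eq, b₆_eq]; ring
  have hy : y ≠ (X0_17 F).negY x y := fun hy ↦ hx <| by rw [← hsq, sub_eq_zero.2 hy]; ring
  refine ⟨_, _, _, by rw [two_nsmul, Point.add_self_of_Y_ne hy], ?_⟩
  have hdup := addX_slope_self_mul h.1 hy
  rw [b₂_eq, b₄_eq, b₆_eq, b₈_eq] at hdup
  rw [eq_div_iff hx]
  linear_combination hdup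

variable [CharZero F]

theorem exists_two_nsmul_eq_some_rat {q : ℚ} {y : F} (h : (X0_17 F).Nonsingular q y)
    (hq : 4 < padicNorm 2 q) :
    ∃ (q' : ℚ) (y' : F) (h' : (X0_17 F).Nonsingular q' y'),
      2 • Point.some _ _ h = .some _ _ h' ∧ padicNorm 2 q' = 4 * padicNorm 2 q := by
  have hden : 4 * q ^ 3 - 3 * q ^ 2 - 2 * q - 55 ≠ 0 := fun h0 ↦ by
    have := padicNorm_two_duplication_den hq
    rw [h0, padicNorm.zero] at this
    nlinarith [pow_pos (show (0 : ℚ) < padicNorm 2 q by linarith) 3]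
  obtain ⟨x', y', h', hP, hx'⟩ := two_nsmul_some h (by exact_mod_cast hden)
  obtain rfl : x' = ((q ^ 4 + q ^ 2 + 110 * q - 41) / (4 * q ^ 3 - 3 * q ^ 2 - 2 * q - 55) : ℚ) :=
    by rw [hx']; push_cast; ring
  refine ⟨_, y', h', hP, ?_⟩
  rw [padicNorm.div, padicNorm_two_duplication_num hq, padicNorm_two_duplication_den hq]
  field_simp

theorem exists_two_pow_nsmul_eq_some_rat {q : ℚ} {y : F} (h : (X0_17 F).Nonsingular q y)
    (hq : 4 < padicNorm 2 q) (k : ℕ) :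
    ∃ (q' : ℚ) (y' : F) (h' : (X0_17 F).Nonsingular q' y'),
      2 ^ k • Point.some _ _ h = .some _ _ h' ∧ padicNorm 2 q' = 4 ^ k * padicNorm 2 q := by
  induction k with
  | zero => exact ⟨q, y, h, one_nsmul _, by ring⟩
  | succ k ih =>
    obtain ⟨q', y', h', hP, hq'⟩ := ih
    have hq'_gt : 4 < padicNorm 2 q' := hq'.symm ▸
      hq.trans_le (le_mul_of_one_le_left (by linarith) (one_le_pow₀ (by norm_num)))
    obtain ⟨q'', y'', h'', hP', hq''⟩ := exists_two_nsmul_eq_some_rat h' hq'_gt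
    exact ⟨q'', y'', h'', by rw [pow_succ, mul_nsmul, hP, hP'], by rw [hq'', hq']; ring⟩

theorem not_isOfFinAddOrder_some {q : ℚ} {y : F} (h : (X0_17 F).Nonsingular q y)
    (hq : 4 < padicNorm 2 q) : ¬IsOfFinAddOrder (Point.some _ _ h) := by
  choose q' y' h' hP hnorm using exists_two_pow_nsmul_eq_some_rat h hq
  refine not_isOfFinAddOrder_of_injective_nsmul_comp (f := (2 ^ ·)) fun j k hjk ↦ ?_
  simp only [hP, Point.some.injEq, Rat.cast_inj] at hjk
  have h4 : (4 : ℚ) ^ j * padicNorm 2 q = 4 ^ k * padicNorm 2 q := by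
    rw [← hnorm, ← hnorm, hjk.1]
  exact pow_right_injective₀ (by norm_num : (0 : ℚ) < 4) (by norm_num)
    (mul_right_cancel₀ (by linarith) h4)

end X0_17

/-- For each `d ∈ {3, 5, 6, 7}`, the group `X₀(17)(ℚ(√d))` contains a point of infinite order. -/
theorem X0_17_infinite_order_point (d : ℕ) (hd : d ∈ ({3, 5, 6, 7} : Set ℕ))
    (z : ℝ) (hz : z ^ 2 = d) :
    ∃ P : (X0_17 ℚ⟮z⟯).Point, ∀ n : ℕ, 0 < n → n • P ≠ 0 := by
  obtain ⟨q, s, hq, hqs⟩ : ∃ q s : ℚ,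
      4 < padicNorm 2 q ∧ d * s ^ 2 = 4 * q ^ 3 - 3 * q ^ 2 - 2 * q - 55 := by
    simp only [Set.mem_insert_iff, Set.mem_singleton_iff] at hd
    rcases hd with rfl | rfl | rfl | rfl
    · exact ⟨_, 105013867865 / 482215136, four_lt_padicNorm_two_div (a := 32357471)
        (b := 61009) (e := 4) (by decide) (by decide) (by norm_num), by norm_num⟩
    · exact ⟨_, 115889 / 23328, four_lt_padicNorm_two_div (a := 5009) (b := 81) (e := 4)
        (by decide) (by decide) (by norm_num), by norm_num⟩
    · exact ⟨_, 3250640221723 / 1204621488000, four_lt_padicNorm_two_div (a := 321021409)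
        (b := 3090675) (e := 5) (by decide) (by decide) (by norm_num), by norm_num⟩
    · exact ⟨_, 2486243555379950626244205 / 26430198251595437924096,
        four_lt_padicNorm_two_div (a := 35482687910696111) (b := 22007648295361) (e := 6)
        (by decide) (by decide) (by norm_num), by norm_num⟩
  have hw : AdjoinSimple.gen ℚ z ^ 2 = ((d : ℚ) : ℚ⟮z⟯) := Subtype.ext (by simpa using hz)
  refine ⟨.some _ _ (X0_17.nonsingular_of_sq_eq hw hqs), fun n hn hn0 ↦ ?_⟩
  exact X0_17.not_isOfFinAddOrder_some _ hq (isOfFinAddOrder_iff_nsmul_eq_zero.2 ⟨n, hn, hn0⟩)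
end

section
/- For each d ∈ {2, 3}, the group X₀(19)(Q(√d)) of Q(√d)-rational points of the modular curve X₀(19) contains a point of infinite order. -/
open Polynomial IntermediateField NumberField

/-!
Fix a valuation `v` on `K` with `v 2 < 1`; one exists on every field of characteristic zero, since
`1/2` is not integral over `ℤ`. If `(x, y) ∈ X₀(19)(K)` satisfies `1 < v(2)² v(x)³`, the curve
equation forces `v(y)² = v(x)³`, and then the duplication formula gives `v(x(2P)) = v(x) / v(2)²`.
So `v(x)` strictly increases along `P, 2P, 4P, …`, these points are pairwise distinct, and `P` has
infinite order. The points `(17/2, -1/2 + 69/4 √2)` and `(31/4, -1/2 + 97/8 √3)` lie in this region.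
-/

open WeierstrassCurve.Affine

variable {R K Γ₀ : Type*} [LinearOrderedCommGroupWithZero Γ₀]

theorem not_isOfFinAddOrder_of_two_nsmul_mem {G α : Type*} [AddMonoid G] [Preorder α]
    {S : Set G} (f : G → α) (hS : ∀ Q ∈ S, 2 • Q ∈ S ∧ f Q < f (2 • Q)) {P : G} (hP : P ∈ S) :
    ¬IsOfFinAddOrder P := by
  have hmem (k : ℕ) : 2 ^ k • P ∈ S := by
    induction k with
    | zero => simpa using hP
    | succ k ih => simpa only [pow_succ', mul_nsmul'] using (hS _ ih).1
  have hmono : StrictMono fun k : ℕ ↦ f (2 ^ k • P) := strictMono_nat_of_lt_succ fun k ↦ by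
    simpa only [pow_succ', mul_nsmul'] using (hS _ (hmem k)).2
  intro hP
  refine Set.infinite_range_of_injective hmono.injective.of_comp (hP.finite_multiples.subset ?_)
  rintro _ ⟨k, rfl⟩
  exact ⟨2 ^ k, rfl⟩

lemma Valuation.map_intCast_le_one [Ring R] (v : Valuation R Γ₀) (n : ℤ) : v n ≤ 1 :=
  (v.mem_integer_iff _).mp (intCast_mem v.integer n)

lemma Valuation.map_intCast_eq_one_of_odd [Ring R] (v : Valuation R Γ₀) (hv2 : v 2 < 1) {m : ℤ}
    (hm : Odd m) : v m = 1 := by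
  obtain ⟨k, rfl⟩ := hm
  have h : v (2 * k) < v 1 := by
    rw [map_mul, v.map_one]
    exact mul_lt_one_of_lt_of_le hv2 (v.map_intCast_le_one k)
  push_cast
  rw [v.map_add_eq_of_lt_right h, v.map_one]

theorem ValuationSubring.exists_valuation_two_lt_one (K : Type*) [Field K] [CharZero K] :
    ∃ V : ValuationSubring K, V.valuation 2 < 1 := by
  have hhalf : (2⁻¹ : K) ∉ (integralClosure ℤ K).toSubring := by
    intro h
    have hint : IsIntegral ℤ (2⁻¹ : ℚ) :=
      (isIntegral_algHom_iff ((Algebra.ofId ℚ K).restrictScalars ℤ)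
        (algebraMap ℚ K).injective).mp (by simpa [mem_integralClosure_iff] using h)
    obtain ⟨n, hn⟩ := IsIntegrallyClosed.isIntegral_iff.mp hint
    have : (2 * n : ℚ) = 1 := by simp_all
    norm_cast at this
    omega
  obtain ⟨V, -, hV⟩ := Subring.exists_le_valuationSubring_of_isIntegrallyClosedIn hhalf
  rw [← V.valuation_le_one_iff, not_le, map_inv₀] at hV
  exact ⟨V, (one_lt_inv_iff₀.mp hV).2⟩

def valuationX [Field K] (v : Valuation K Γ₀) {W : WeierstrassCurve.Affine K} : W.Point → Γ₀
  | .zero => 0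
  | .some x _ _ => v x

namespace X0_19

variable [Field K] {x y : K}

lemma equation_iff : (X0_19 K).Equation x y ↔ y ^ 2 + y = x ^ 3 + x ^ 2 - 9 * x - 15 := by
  rw [WeierstrassCurve.Affine.equation_iff]
  simp only [X0_19]
  ring_nf

lemma nonsingular_of (hxy : y ^ 2 + y = x ^ 3 + x ^ 2 - 9 * x - 15) (hy : 2 * y + 1 ≠ 0) :
    (X0_19 K).Nonsingular x y := by
  rw [nonsingular_iff, equation_iff]
  refine ⟨hxy, Or.inr fun h ↦ hy ?_⟩
  simp only [X0_19] at h
  linear_combination h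

variable (v : Valuation K Γ₀)

lemma valuation_y_sq (hv2 : v 2 < 1) (hxy : y ^ 2 + y = x ^ 3 + x ^ 2 - 9 * x - 15)
    (hx : 1 < v 2 ^ 2 * v x ^ 3) : 1 < v x ∧ v y ^ 2 = v x ^ 3 ∧ 1 < v 2 * v y := by
  have hX : 1 < v x := by
    by_contra! hX
    exact hx.not_ge (mul_le_one' (pow_le_one₀ zero_le hv2.le) (pow_le_one₀ zero_le hX))
  have h9 : v 9 = 1 := by simpa using v.map_intCast_eq_one_of_odd hv2 (m := 9) ⟨4, by norm_num⟩
  have h15 : v 15 = 1 := by simpa using v.map_intCast_eq_one_of_odd hv2 (m := 15) ⟨7, by norm_num⟩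
  have hX3 : 1 < v x ^ 3 := one_lt_pow₀ hX (by norm_num)
  have hrest : v (x ^ 2 - 9 * x - 15) < v (x ^ 3) := by
    rw [map_pow]
    refine v.map_sub_lt (v.map_sub_lt ?_ ?_) (h15 ▸ hX3)
    · rw [map_pow]
      exact pow_lt_pow_right₀ hX (by norm_num)
    · rw [map_mul, h9, one_mul]
      exact (pow_one (v x)).symm.trans_lt (pow_lt_pow_right₀ hX (by norm_num))
  have hrhs : v (y ^ 2 + y) = v x ^ 3 := by
    rw [hxy, add_sub_assoc, add_sub_assoc, v.map_add_eq_of_lt_left hrest, map_pow]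
  have hY : 1 < v y := by
    by_contra! hY
    refine hX3.not_ge (hrhs ▸ v.map_add_le ?_ hY)
    rw [map_pow]
    exact pow_le_one₀ zero_le hY
  have hY2 : v y ^ 2 = v x ^ 3 := by
    rwa [v.map_add_eq_of_lt_left, map_pow] at hrhs
    rw [map_pow]
    exact (pow_one (v y)).symm.trans_lt (pow_lt_pow_right₀ hY (by norm_num))
  refine ⟨hX, hY2, ?_⟩
  by_contra! h
  exact hx.not_ge (by rw [← hY2, ← mul_pow]; exact pow_le_one₀ zero_le h)

/-- The expression under `v` is the duplication formula for the `x`-coordinate on `X₀(19)`. -/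
lemma valuation_x_two_nsmul (hv2 : v 2 < 1) (hxy : y ^ 2 + y = x ^ 3 + x ^ 2 - 9 * x - 15)
    (hx : 1 < v 2 ^ 2 * v x ^ 3) :
    2 * y + 1 ≠ 0 ∧
      v (((3 * x ^ 2 + 2 * x - 9) / (2 * y + 1)) ^ 2 - 1 - 2 * x) * v 2 ^ 2 = v x := by
  obtain ⟨hX, hY2, hcY⟩ := valuation_y_sq v hv2 hxy hx
  have h3 : v 3 = 1 := by simpa using v.map_intCast_eq_one_of_odd hv2 (m := 3) ⟨1, by norm_num⟩
  have h9 : v 9 = 1 := by simpa using v.map_intCast_eq_one_of_odd hv2 (m := 9) ⟨4, by norm_num⟩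
  have h2x : v (2 * x) < v x := by
    rw [map_mul]
    exact mul_lt_of_lt_one_left (zero_lt_one.trans hX) hv2
  have hden : v (2 * y + 1) = v 2 * v y := by
    rw [v.map_add_eq_of_lt_left (by rwa [v.map_one, map_mul]), map_mul]
  have hden0 : 2 * y + 1 ≠ 0 := v.ne_zero_iff.mp (hden ▸ (zero_lt_one.trans hcY).ne')
  have hnum : v (3 * x ^ 2 + 2 * x - 9) = v x ^ 2 := by
    have hX2 : v x < v x ^ 2 := (pow_one (v x)).symm.trans_lt (pow_lt_pow_right₀ hX one_lt_two)
    rw [add_sub_assoc, v.map_add_eq_of_lt_left, map_mul, h3, one_mul, map_pow]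
    rw [map_mul, h3, one_mul, map_pow]
    exact v.map_sub_lt (h2x.trans hX2) (h9 ▸ one_lt_pow₀ hX two_ne_zero)
  set ℓ := (3 * x ^ 2 + 2 * x - 9) / (2 * y + 1)
  have hℓ : v ℓ * (v 2 * v y) = v x ^ 2 := by
    rw [← hden, ← hnum, ← map_mul, div_mul_cancel₀ _ hden0]
  have hℓ2 : v (ℓ ^ 2) * v 2 ^ 2 = v x := by
    refine mul_right_cancel₀ (pow_ne_zero 3 (zero_lt_one.trans hX).ne') ?_
    calc v (ℓ ^ 2) * v 2 ^ 2 * v x ^ 3 = (v ℓ * (v 2 * v y)) ^ 2 := by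
          rw [← hY2, map_pow, mul_pow, mul_pow, mul_assoc]
      _ = v x * v x ^ 3 := by rw [hℓ, ← pow_mul, ← pow_succ']
  have hxℓ : v x ≤ v (ℓ ^ 2) := hℓ2 ▸ mul_le_of_le_one_right zero_le (pow_le_one₀ zero_le hv2.le)
  refine ⟨hden0, ?_⟩
  rwa [sub_sub, v.map_sub_eq_of_lt_left]
  rw [add_comm]
  exact v.map_add_lt (h2x.trans_le hxℓ) ((v.map_one.trans_lt hX).trans_le hxℓ)

lemma two_nsmul_some [DecidableEq K] (hv2 : v 2 < 1) (h : (X0_19 K).Nonsingular x y)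
    (hx : 1 < v 2 ^ 2 * v x ^ 3) :
    ∃ (x' y' : K) (h' : (X0_19 K).Nonsingular x' y'),
      2 • Point.some x y h = Point.some x' y' h' ∧ v x' * v 2 ^ 2 = v x := by
  obtain ⟨hy, hval⟩ := valuation_x_two_nsmul v hv2 (equation_iff.mp h.1) hx
  have hne : y ≠ (X0_19 K).negY x y := fun hy' ↦ hy (by
    simp only [negY, X0_19] at hy'
    linear_combination hy')
  refine ⟨_, _, _, by rw [two_nsmul, Point.add_self_of_Y_ne hne], ?_⟩
  convert hval using 3
  rw [slope_of_Y_ne rfl hne]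
  simp only [addX, negY, X0_19]
  ring

theorem not_isOfFinAddOrder_some [CharZero K] [DecidableEq K] (h : (X0_19 K).Nonsingular x y)
    {m : ℤ} (hm : Odd m) {k : ℕ} (hk : k ≠ 0) (hx : x = m / 2 ^ k) :
    ¬IsOfFinAddOrder (Point.some x y h) := by
  obtain ⟨V, hV⟩ := ValuationSubring.exists_valuation_two_lt_one K
  set v := V.valuation
  have hv0 : 0 < v 2 := zero_lt_iff.mpr (v.ne_zero_iff.mpr two_ne_zero)
  refine not_isOfFinAddOrder_of_two_nsmul_mem (valuationX v)
    (S := {Q | 1 < v 2 ^ 2 * valuationX v Q ^ 3}) ?_ ?_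
  · rintro (_ | ⟨x, y, h⟩) hQ
    · simp [valuationX] at hQ
    obtain ⟨x', y', h', hQ', hval⟩ := two_nsmul_some v hV h hQ
    have hx0 : v x ≠ 0 := by
      rintro h0
      simp [valuationX, h0] at hQ
    have hlt : v x < v x' := hval ▸ mul_lt_of_lt_one_right
      (zero_lt_iff.mpr (left_ne_zero_of_mul (hval ▸ hx0))) (pow_lt_one₀ zero_le hV two_ne_zero)
    rw [hQ']
    refine ⟨?_, hlt⟩
    change 1 < v 2 ^ 2 * v x' ^ 3
    exact hQ.trans_le (by gcongr; exact hlt.le)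
  · change 1 < v 2 ^ 2 * v x ^ 3
    rw [hx, map_div₀, v.map_intCast_eq_one_of_odd hV hm, map_pow, one_div, inv_pow, ← pow_mul,
      lt_mul_inv_iff₀ (pow_pos hv0 _), one_mul]
    exact pow_lt_pow_right_of_lt_one₀ hv0 hV (by omega)

end X0_19

/-- For each `d ∈ {2, 3}`, the group `X₀(19)(ℚ(√d))` contains a point of infinite order. -/
theorem X0_19_infinite_order_point (d : ℕ) (hd : d ∈ ({2, 3} : Set ℕ))
    (z : ℝ) (hz : z ^ 2 = d) :
    ∃ P : (X0_19 ℚ⟮z⟯).Point, ∀ n : ℕ, 0 < n → n • P ≠ 0 := by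
  set ζ : ℚ⟮z⟯ := ⟨z, mem_adjoin_simple_self ℚ z⟩
  have hζ : ζ ^ 2 = d := Subtype.ext (by simpa using hz)
  have hζ0 : ζ ≠ 0 := by
    rintro h
    rcases hd with rfl | rfl <;> simp [h] at hζ
  suffices ∃ (x y : ℚ⟮z⟯) (m : ℤ) (k : ℕ), y ^ 2 + y = x ^ 3 + x ^ 2 - 9 * x - 15 ∧
      2 * y + 1 ≠ 0 ∧ Odd m ∧ k ≠ 0 ∧ x = m / 2 ^ k by
    obtain ⟨x, y, m, k, hxy, hy, hm, hk, hx⟩ := this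
    have h := X0_19.nonsingular_of hxy hy
    exact ⟨.some _ _ h, fun n hn hP ↦ X0_19.not_isOfFinAddOrder_some h hm hk hx
      (isOfFinAddOrder_iff_nsmul_eq_zero.mpr ⟨n, hn, hP⟩)⟩
  rcases hd with rfl | rfl
  · refine ⟨17 / 2, -1 / 2 + 69 / 4 * ζ, 17, 1, by linear_combination (69 / 4) ^ 2 * hζ, ?_,
      ⟨8, rfl⟩, one_ne_zero, by norm_num⟩
    ring_nf
    simpa using hζ0
  · refine ⟨31 / 4, -1 / 2 + 97 / 8 * ζ, 31, 2, by linear_combination (97 / 8) ^ 2 * hζ, ?_,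
      ⟨15, rfl⟩, two_ne_zero, by norm_num⟩
    ring_nf
    simpa using hζ0
end

section
/- Every unit of the ring of integers of Q(√6) is of the form ±(5 + 2√6)ⁿ for some integer n; that is, ε = 5 + 2√6 is a fundamental unit of Q(√6). -/
/-!
If `p + q√6` (`p, q ∈ ℚ`) is integral, its minimal polynomial `X² - 2pX + (p² - 6q²)` has integer
coefficients by Gauss's lemma. As `6` is squarefree, `6(2q)² = (2p)² - 4(p² - 6q²) ∈ ℤ` makes `2q`
an integer, and as `6 ≡ 2 (mod 4)` the same identity read modulo `4` makes `2p` and `2q` even;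
hence the ring of integers is `ℤ[√6]`. A unit of `ℤ[√6]` has norm `±1`, and norm `-1` is impossible
modulo `3`, so up to sign the units are the solutions of Pell's equation `x² - 6y² = 1`, whose
fundamental solution is `(5, 2)`.
-/

open IntermediateField NumberField Polynomial

theorem Int.two_dvd_of_four_dvd_sq_sub_mul_sq {d A B : ℤ} (hd : d % 4 = 2 ∨ d % 4 = 3)
    (h : 4 ∣ A ^ 2 - d * B ^ 2) : 2 ∣ A ∧ 2 ∣ B := by
  have key : ∀ a b c : ZMod 4, (c = 2 ∨ c = 3) → a ^ 2 - c * b ^ 2 = 0 →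
      2 * a = 0 ∧ 2 * b = 0 := by
    decide
  have hc : (d : ZMod 4) = 2 ∨ (d : ZMod 4) = 3 := by
    rw [← ZMod.intCast_mod d 4]
    rcases hd with hd | hd <;> simp [hd]
  have h4 := key A B d hc (by exact_mod_cast (ZMod.intCast_zmod_eq_zero_iff_dvd _ 4).mpr h)
  have hA := (ZMod.intCast_zmod_eq_zero_iff_dvd (2 * A) 4).mp (by exact_mod_cast h4.1)
  have hB := (ZMod.intCast_zmod_eq_zero_iff_dvd (2 * B) 4).mp (by exact_mod_cast h4.2)
  omega

theorem Int.not_isSquare_of_emod_four {d : ℤ} (hd : d % 4 = 2 ∨ d % 4 = 3) : ¬IsSquare d := by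
  rintro ⟨n, rfl⟩
  have := (Int.two_dvd_of_four_dvd_sq_sub_mul_sq hd (A := n) (B := 1) (by simp [sq])).2
  omega

theorem Rat.exists_intCast_eq_of_squarefree_mul_sq {d m : ℤ} (hd : Squarefree d) {q : ℚ}
    (h : d * q ^ 2 = m) : ∃ b : ℤ, q = b := by
  have hnum : d * q.num ^ 2 = m * (q.den : ℤ) ^ 2 := by
    have hq : (q.num : ℚ) = q * q.den := (Rat.mul_den_eq_num q).symm
    exact_mod_cast (show (d : ℚ) * q.num ^ 2 = m * q.den ^ 2 by rw [hq, ← h]; ring)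
  have hcop : IsCoprime ((q.den : ℤ) ^ 2) (q.num ^ 2) := q.isCoprime_num_den.symm.pow
  have hdvd : (q.den : ℤ) ^ 2 ∣ d := hcop.dvd_of_dvd_mul_right ⟨m, by rw [hnum, mul_comm]⟩
  have hunit : IsUnit (q.den : ℤ) := hd _ (by rwa [← sq])
  refine ⟨q.num, (Rat.coe_int_num_of_den_eq_one ?_).symm⟩
  exact_mod_cast Int.isUnit_iff.mp hunit |>.resolve_right (by omega)

section
variable {L : Type*} [Field L] [CharZero L]

theorem exists_int_eq_of_isIntegral_of_sq_sub_mul_add_eq_zero {x : L} (hx : IsIntegral ℤ x)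
    (hxQ : x ∉ Set.range ((↑) : ℚ → L)) {s t : ℚ} (hroot : x ^ 2 - s * x + t = 0) :
    ∃ A N : ℤ, (A : ℚ) = s ∧ (N : ℚ) = t := by
  set P : ℚ[X] := X ^ 2 - C s * X + C t
  have hP : P.Monic := by simp only [P]; monicity!
  have hdeg : P.natDegree = 2 := by simp only [P]; compute_degree!
  have hxQ' : IsIntegral ℚ x := hx.tower_top
  have hmin : minpoly ℚ x = P := by
    refine eq_of_monic_of_associated (minpoly.monic hxQ') hP
      (associated_of_dvd_of_natDegree_le (minpoly.dvd ℚ x (by simpa [P] using hroot)) hP.ne_zero ?_)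
    rw [hdeg, minpoly.two_le_natDegree_iff hxQ']
    exact hxQ
  rw [minpoly.isIntegrallyClosed_eq_field_fractions' ℚ hx] at hmin
  refine ⟨-(minpoly ℤ x).coeff 1, (minpoly ℤ x).coeff 0, ?_, ?_⟩
  · simpa [P, coeff_C, neg_eq_iff_eq_neg] using congrArg (coeff · 1) hmin
  · simpa [P, coeff_C] using congrArg (coeff · 0) hmin

theorem exists_int_eq_two_mul_and_sq_sub_mul_sq {d : ℚ} {g : L} (hg : g ^ 2 = d)
    (hgQ : g ∉ Set.range ((↑) : ℚ → L)) {p q : ℚ} (h : IsIntegral ℤ ((p : L) + q * g)) :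
    ∃ A N : ℤ, (A : ℚ) = 2 * p ∧ (N : ℚ) = p ^ 2 - d * q ^ 2 := by
  rcases eq_or_ne q 0 with rfl | hq
  · obtain ⟨a, rfl⟩ : ∃ a : ℤ, (a : ℚ) = p := by
      rw [Rat.cast_zero, zero_mul, add_zero, ← eq_ratCast (algebraMap ℚ L),
        isIntegral_algebraMap_iff (algebraMap ℚ L).injective] at h
      exact IsIntegrallyClosed.isIntegral_iff.mp h
    exact ⟨2 * a, a ^ 2, by push_cast; ring, by push_cast; ring⟩
  · refine exists_int_eq_of_isIntegral_of_sq_sub_mul_add_eq_zero h ?_ ?_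
    · rintro ⟨r, hr⟩
      refine hgQ ⟨(r - p) / q, ?_⟩
      rw [Rat.cast_div, Rat.cast_sub, hr, div_eq_iff (Rat.cast_ne_zero.mpr hq)]
      ring
    · push_cast
      linear_combination (q : L) ^ 2 * hg

theorem exists_int_eq_of_isIntegral_add_mul {d : ℤ} (hd : Squarefree d)
    (hd4 : d % 4 = 2 ∨ d % 4 = 3) {g : L} (hg : g ^ 2 = d) {p q : ℚ}
    (h : IsIntegral ℤ ((p : L) + q * g)) : ∃ a b : ℤ, p = a ∧ q = b := by
  have hgQ : g ∉ Set.range ((↑) : ℚ → L) := by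
    rintro ⟨r, rfl⟩
    refine Int.not_isSquare_of_emod_four hd4 (Rat.isSquare_intCast_iff.mp ⟨r, ?_⟩)
    exact_mod_cast (hg.symm.trans (sq _))
  obtain ⟨A, N, hA, hN⟩ :=
    exists_int_eq_two_mul_and_sq_sub_mul_sq (d := d) (by exact_mod_cast hg) hgQ h
  obtain ⟨B, hB⟩ := Rat.exists_intCast_eq_of_squarefree_mul_sq hd (q := 2 * q)
    (m := A ^ 2 - 4 * N) (by push_cast; rw [hA, hN]; ring)
  have h4 : 4 ∣ A ^ 2 - d * B ^ 2 :=
    ⟨N, by exact_mod_cast (show (A : ℚ) ^ 2 - d * B ^ 2 = 4 * N by rw [hA, hN, ← hB]; ring)⟩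
  obtain ⟨⟨a, rfl⟩, ⟨b, rfl⟩⟩ := Int.two_dvd_of_four_dvd_sq_sub_mul_sq hd4 h4
  exact ⟨a, b, by push_cast at hA; linarith, by push_cast at hB; linarith⟩

end

theorem exists_eq_add_mul_of_mem_adjoin_simple {F E : Type*} [Field F] [Field E] [Algebra F E]
    {d : F} {z : E} (hz : z ^ 2 = algebraMap F E d) {y : E} (hy : y ∈ F⟮z⟯) :
    ∃ p q : F, y = algebraMap F E p + algebraMap F E q * z := by
  set Q : F[X] := X ^ 2 - C d
  have hQ : Q.Monic := monic_X_pow_sub_C _ two_ne_zero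
  have hQdeg : Q.natDegree = 2 := natDegree_X_pow_sub_C
  have hroot : aeval z Q = 0 := by simp [Q, hz]
  have hzF : IsIntegral F z := ⟨Q, hQ, hroot⟩
  rw [← mem_toSubalgebra, adjoin_simple_toSubalgebra_of_isAlgebraic hzF.isAlgebraic,
    Algebra.adjoin_singleton_eq_range_aeval] at hy
  obtain ⟨f, rfl⟩ := hy
  have hdeg : (f %ₘ Q).natDegree ≤ 1 := by
    have := natDegree_modByMonic_lt f hQ fun h => by simp [h] at hQdeg
    omega
  refine ⟨(f %ₘ Q).coeff 0, (f %ₘ Q).coeff 1, ?_⟩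
  rw [AlgHom.toRingHom_eq_coe, RingHom.coe_coe, ← aeval_modByMonic_eq_self_of_root hroot,
    eq_X_add_C_of_natDegree_le_one hdeg]
  simp only [map_add, map_mul, aeval_C, aeval_X, coeff_add, mul_coeff_zero, coeff_C_zero,
    coeff_X_zero, mul_zero, zero_add, coeff_mul_X, coeff_C_succ, add_zero]
  ring

theorem RingHom.exists_units_map_eq_of_forall_mem_range {R S T : Type*} [CommSemiring R]
    [Semiring S] [Semiring T] {φ : R →+* S} (hφ : Function.Injective φ) {ψ : T →+* S}
    (h : ∀ t, ψ t ∈ Set.range φ) (u : Tˣ) : ∃ w : Rˣ, φ w = ψ u := by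
  obtain ⟨w, hw⟩ := h u
  obtain ⟨w', hw'⟩ := h ↑u⁻¹
  have hmul : w * w' = 1 :=
    hφ (by rw [map_mul, hw, hw', ← map_mul, Units.mul_inv, map_one, map_one])
  exact ⟨⟨w, w', hmul, by rwa [mul_comm]⟩, hw⟩

section
variable {E : Type*} [Field E] [Algebra ℚ E] {d : ℤ} {z : E}

theorem IntermediateField.AdjoinSimple.gen_sq_eq (hz : z ^ 2 = d) : AdjoinSimple.gen ℚ z ^ 2 = d :=
  (algebraMap ℚ⟮z⟯ E).injective (by simp [hz])

noncomputable def zsqrtdToAdjoin (hz : z ^ 2 = d) : ℤ√d →+* ℚ⟮z⟯ :=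
  Zsqrtd.lift ⟨AdjoinSimple.gen ℚ z, by rw [← sq, AdjoinSimple.gen_sq_eq hz]⟩

theorem zsqrtdToAdjoin_injective (hd4 : d % 4 = 2 ∨ d % 4 = 3) (hz : z ^ 2 = d) :
    Function.Injective (zsqrtdToAdjoin hz) :=
  Zsqrtd.lift_injective _ fun n h => Int.not_isSquare_of_emod_four hd4 ⟨n, h⟩

theorem mem_range_zsqrtdToAdjoin_of_isIntegral (hd : Squarefree d)
    (hd4 : d % 4 = 2 ∨ d % 4 = 3) (hz : z ^ 2 = d) {y : ℚ⟮z⟯} (hy : IsIntegral ℤ y) :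
    y ∈ Set.range (zsqrtdToAdjoin hz) := by
  have := algebraRat.charZero E
  obtain ⟨p, q, hpq⟩ := exists_eq_add_mul_of_mem_adjoin_simple (d := (d : ℚ))
    (by rw [hz, map_intCast]) y.2
  have hyE : IsIntegral ℤ ((p : E) + q * z) := by
    rw [← eq_ratCast (algebraMap ℚ E), ← eq_ratCast (algebraMap ℚ E), ← hpq]
    exact hy.algebraMap
  obtain ⟨a, b, rfl, rfl⟩ := exists_int_eq_of_isIntegral_add_mul hd hd4 hz hyE
  refine ⟨⟨a, b⟩, (algebraMap ℚ⟮z⟯ E).injective ?_⟩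
  simp [zsqrtdToAdjoin, hpq]

theorem exists_units_zsqrtdToAdjoin_eq (hd : Squarefree d) (hd4 : d % 4 = 2 ∨ d % 4 = 3)
    (hz : z ^ 2 = d) (u : (𝓞 ℚ⟮z⟯)ˣ) :
    ∃ w : (ℤ√d)ˣ, zsqrtdToAdjoin hz w = ((u : 𝓞 ℚ⟮z⟯) : ℚ⟮z⟯) :=
  RingHom.exists_units_map_eq_of_forall_mem_range (zsqrtdToAdjoin_injective hd4 hz)
    (ψ := algebraMap (𝓞 ℚ⟮z⟯) ℚ⟮z⟯)
    (fun v => mem_range_zsqrtdToAdjoin_of_isIntegral hd hd4 hz (RingOfIntegers.isIntegral_coe v)) u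

end

theorem Zsqrtd.norm_ne_neg_one_of_three_dvd {d : ℤ} (hd : 3 ∣ d) (w : ℤ√d) : w.norm ≠ -1 := by
  intro h
  obtain ⟨k, rfl⟩ := hd
  have hre : w.re * w.re = 3 * (k * w.im * w.im) - 1 := by
    rw [Zsqrtd.norm_def] at h
    linear_combination h
  have := Int.mul_emod w.re w.re 3
  rcases (by omega : w.re % 3 = 0 ∨ w.re % 3 = 1 ∨ w.re % 3 = 2) with hr | hr | hr <;>
    rw [hr] at this <;> omega

theorem Zsqrtd.norm_eq_one_of_isUnit {d : ℤ} (hd : 3 ∣ d) {w : ℤ√d} (hw : IsUnit w) :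
    w.norm = 1 :=
  (Int.isUnit_iff.mp ((Zsqrtd.isUnit_iff_norm_isUnit w).mp hw)).resolve_right
    (Zsqrtd.norm_ne_neg_one_of_three_dvd hd w)

theorem Pell.isFundamental_five_two :
    Pell.IsFundamental (Pell.Solution₁.mk 5 2 (by norm_num) : Pell.Solution₁ 6) := by
  refine ⟨by norm_num, by norm_num, fun {b} hb => ?_⟩
  rw [Pell.Solution₁.x_mk]
  by_contra! hlt
  have hx := b.prop_x
  have hy : 0 < b.y ^ 2 := by positivity [Pell.Solution₁.y_ne_zero_of_one_lt_x hb]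
  interval_cases b.x <;> omega

theorem MonoidHom.map_coe_unitary_zpow {R M : Type*} [Monoid R] [StarMul R] [DivisionMonoid M]
    (φ : R →* M) (s : unitary R) (n : ℤ) : φ ↑(s ^ n) = φ ↑s ^ n := by
  have := congrArg Units.val (map_zpow ((Units.map φ).comp Unitary.toUnits) s n)
  simpa only [MonoidHom.comp_apply, Units.coe_map, Unitary.val_toUnits_apply,
    Units.val_zpow_eq_zpow_val] using this

/-- Every unit of the ring of integers of `ℚ(√6)` is of the form `±(5 + 2√6)ⁿ` for some
integer `n`; that is, `ε = 5 + 2√6` is a fundamental unit of `ℚ(√6)`. -/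
theorem fundamentalUnit_sqrt6 (z : ℝ) (hz : z ^ 2 = 6) :
    ∀ u : (𝓞 ℚ⟮z⟯)ˣ, ∃ n : ℤ,
      ((u : 𝓞 ℚ⟮z⟯) : ℚ⟮z⟯) = (5 + 2 * AdjoinSimple.gen ℚ z) ^ n ∨
      ((u : 𝓞 ℚ⟮z⟯) : ℚ⟮z⟯) = -(5 + 2 * AdjoinSimple.gen ℚ z) ^ n := by
  intro u
  have hz6 : z ^ 2 = ((6 : ℤ) : ℝ) := by exact_mod_cast hz
  have hsq : Squarefree (6 : ℤ) := Int.squarefree_natCast.mpr (Nat.squarefree_mul_iff.mpr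
    ⟨by norm_num, Nat.prime_two.squarefree, Nat.prime_three.squarefree⟩ : Squarefree (2 * 3))
  set φ := zsqrtdToAdjoin hz6
  obtain ⟨w, hw⟩ := exists_units_zsqrtdToAdjoin_eq hsq (by norm_num) hz6 u
  have hw1 : (w : ℤ√6) ∈ unitary (ℤ√6) :=
    Zsqrtd.norm_eq_one_iff_mem_unitary.mp (Zsqrtd.norm_eq_one_of_isUnit (by norm_num) w.isUnit)
  obtain ⟨n, hn⟩ := Pell.isFundamental_five_two.eq_zpow_or_neg_zpow ⟨w, hw1⟩
  have hpow : φ ↑((Pell.Solution₁.mk 5 2 (by norm_num) : Pell.Solution₁ 6) ^ n) =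
      (5 + 2 * AdjoinSimple.gen ℚ z) ^ n :=
    (MonoidHom.map_coe_unitary_zpow (φ : ℤ√6 →* ℚ⟮z⟯) _ n).trans (by simp [φ, zsqrtdToAdjoin])
  refine ⟨n, ?_⟩
  rw [← hw, ← hpow]
  rcases hn with h | h
  · exact Or.inl (congrArg (fun s : Pell.Solution₁ 6 => φ s) h)
  · exact Or.inr ((congrArg (fun s : Pell.Solution₁ 6 => φ s) h).trans (map_neg φ _))
end

section
/- Let K = Q(√318049), where 318049 = 47 · 67 · 101, and let ε = 13535 + 24√318049. Then no prime p ≥ 23 dividing the integer Norm(ε¹² − 1) splits in K; equivalently, for every prime p ≥ 23 dividing |Norm(ε¹² − 1)|, either p divides 318049 or 318049 is not a square modulo p. -/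
open IntermediateField Polynomial

/-!
In `ℤ[√d]`, `d = 318049`, write `ε¹² - 1 = x + y√d`. As `1, √d` is a basis of `ℚ(√d)`, the norm
is the integer `x² - d y²`, which factors explicitly; each of its prime factors `p ≥ 23` either
divides `d = 47 · 67 · 101` or has Legendre symbol `(d / p) = -1`.
-/

section QuadraticNorm

variable {K L : Type*} [Field K] [Field L] [Algebra K L]

theorem Algebra.norm_zsqrtd_lift (pb : PowerBasis K L) (hdim : pb.dim = 2) {d : ℤ}
    (hgen : pb.gen * pb.gen = d) (w : ℤ√d) :
    Algebra.norm K (Zsqrtd.lift ⟨pb.gen, hgen⟩ w) = w.norm := by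
  let b : Module.Basis (Fin 2) K L := pb.basis.reindex (finCongr hdim)
  have hb0 : b 0 = 1 := by simp [b]
  have hb1 : b 1 = pb.gen := by simp [b]
  have hrepr (u v : K) : b.repr (u • b 0 + v • b 1) = ![u, v] := by
    ext i; fin_cases i <;> simp
  have hmul0 : Zsqrtd.lift ⟨pb.gen, hgen⟩ w * b 0 = (w.re : K) • b 0 + (w.im : K) • b 1 := by
    simp [hb0, hb1, Algebra.smul_def]
  have hmul1 :
      Zsqrtd.lift ⟨pb.gen, hgen⟩ w * b 1 = ((d : K) * w.im) • b 0 + (w.re : K) • b 1 := by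
    simp only [Zsqrtd.lift_apply_apply, hb0, hb1, Algebra.smul_def, map_mul, map_intCast,
      mul_one]
    linear_combination (w.im : L) * hgen
  rw [Algebra.norm_eq_matrix_det b, Matrix.det_fin_two]
  simp only [Algebra.leftMulMatrix_eq_repr_mul, hmul0, hmul1, hrepr]
  simp [Zsqrtd.norm_def]

theorem minpoly_eq_X_sq_sub_C {z : L} {d : K} (hz : z ^ 2 = algebraMap K L d)
    (hd : ¬IsSquare d) : minpoly K z = X ^ 2 - C d := by
  have hmonic : (X ^ 2 - C d).Monic := monic_X_pow_sub_C d two_ne_zero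
  refine (minpoly.eq_of_irreducible_of_monic ?_ (by simp [hz]) hmonic).symm
  refine X_pow_sub_C_irreducible_of_prime Nat.prime_two fun b hb => hd ⟨b, ?_⟩
  rw [← hb, sq]

theorem IntermediateField.AdjoinSimple.gen_mul_gen_eq_intCast {z : L} {d : ℤ} (hz : z * z = d) :
    AdjoinSimple.gen K z * AdjoinSimple.gen K z = d :=
  (algebraMap K⟮z⟯ L).injective (by simp [hz])

theorem IntermediateField.norm_zsqrtd_lift_adjoin {z : L} {d : ℤ} (hz : z * z = d)
    (hd : ¬IsSquare (d : K)) (w : ℤ√d) :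
    Algebra.norm K (Zsqrtd.lift ⟨AdjoinSimple.gen K z, AdjoinSimple.gen_mul_gen_eq_intCast hz⟩ w)
      = w.norm := by
  have hz' : z ^ 2 = algebraMap K L d := by rw [sq, hz, map_intCast]
  have hint : IsIntegral K z := .of_pow two_pos (hz' ▸ isIntegral_algebraMap)
  have hdim : (adjoin.powerBasis hint).dim = 2 := by
    rw [adjoin.powerBasis_dim, minpoly_eq_X_sq_sub_C hz' hd, natDegree_X_pow_sub_C]
  exact Algebra.norm_zsqrtd_lift (adjoin.powerBasis hint) hdim _ w

end QuadraticNorm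

theorem primeFactors_natAbs_norm_pow_twelve_sub_one :
    ((⟨13535, 24⟩ : ℤ√318049) ^ 12 - 1).norm.natAbs.primeFactors =
      {2, 3, 5, 7, 11, 13, 23, 47, 59, 67, 101, 107, 1289, 2707, 955391} := by
  have hfactor : ((⟨13535, 24⟩ : ℤ√318049) ^ 12 - 1).norm.natAbs = 2 ^ 10 * 3 ^ 4 * 5 ^ 2 *
      7 ^ 2 * 11 ^ 2 * 13 ^ 2 * 23 ^ 2 * 47 * 59 ^ 2 * 67 * 101 * 107 ^ 2 * 1289 ^ 2 *
      2707 ^ 2 * 955391 ^ 2 := by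
    decide
  rw [hfactor]
  simp (disch := norm_num) only [Nat.primeFactors_mul, Nat.primeFactors_pow,
    Nat.Prime.primeFactors]
  rfl

/-- Let `K = ℚ(√318049)`, where `318049 = 47 · 67 · 101`, and let `ε = 13535 + 24√318049`.
Then no prime `p ≥ 23` dividing the integer `Norm(ε¹² - 1)` splits in `K`; equivalently,
for every prime `p ≥ 23` dividing `|Norm(ε¹² - 1)|`, either `p` divides `318049` or `318049`
is not a square modulo `p`. -/
theorem no_split_prime_divides_norm (z : ℝ) (hz : z ^ 2 = 318049) :
    ∃ N : ℤ, (N : ℚ) = Algebra.norm ℚ ((13535 + 24 * AdjoinSimple.gen ℚ z) ^ 12 - 1) ∧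
      ∀ p : ℕ, p.Prime → 23 ≤ p → (p : ℤ) ∣ N →
        (p ∣ 318049 ∨ ¬ IsSquare (318049 : ZMod p)) := by
  have hz' : z * z = (318049 : ℤ) := by rw [← sq, hz]; norm_num
  let w : ℤ√318049 := ⟨13535, 24⟩ ^ 12 - 1
  refine ⟨w.norm, ?_, fun p hp hp23 hpN => ?_⟩
  · rw [← norm_zsqrtd_lift_adjoin hz' (by norm_num) w]
    simp only [w, map_sub, map_pow, map_one, Zsqrtd.lift_apply_apply]
    push_cast; rfl
  have hmem : p ∈ w.norm.natAbs.primeFactors :=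
    Nat.mem_primeFactors.mpr ⟨hp, Int.natCast_dvd.mp hpN, by decide⟩
  have := Fact.mk hp
  simp only [w, primeFactors_natAbs_norm_pow_twelve_sub_one, Finset.mem_insert,
    Finset.mem_singleton] at hmem
  rcases hmem with rfl | rfl | rfl | rfl | rfl | rfl | rfl | rfl | rfl | rfl | rfl | rfl | rfl |
    rfl | rfl <;>
  first
  | omega
  | exact .inl (by decide)
  | exact .inr (by simpa using (legendreSym.eq_neg_one_iff' _ (a := 318049)).mp (by norm_num))
end
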